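/- arXiv:2605.19396 — 2 statements merged into one kernel-verified Lean document; each statement's English description precedes it below -/
import Mathlib

section
/- Let W be an N×N real symmetric doubly stochastic matrix with ρ := ‖W − J‖₂, and let f₁,…,f_N : ℝ^d → ℝ be twice continuously differentiable with L₂-Lipschitz Hessians (in spectral norm). Let X = (x₁,…,x_N) and X' = (x₁',…,x_N') be stacked vectors in (ℝ^d)^N, let H̃ = (H̃₁,…,H̃_N) be a stacked family of d×d matrices whose blocks are measured in Frobenius norm, and let Δ have blocks Δᵢ := ∇²fᵢ(xᵢ') − ∇²fᵢ(xᵢ). Then for every integer m ≥ 1, D((Wᵐ ⊗ I_{d²})(H̃ + Δ)) ≤ ρᵐ·(D(H̃) + (√d·L₂/√N)·‖X' − X‖), where D applied to stacked matrices uses the Frobenius norm of each block and ‖X' − X‖ := (∑ᵢ‖xᵢ' − xᵢ‖²)^{1/2}. -/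
open scoped BigOperators

/-- Squared Frobenius norm of a real matrix. -/
noncomputable def frobSq {d : ℕ} (A : Matrix (Fin d) (Fin d) ℝ) : ℝ :=
  ∑ a, ∑ b, (A a b) ^ 2

/-- RMS dispersion of a stacked family of `d×d` matrices,
each block measured in Frobenius norm. -/
noncomputable def dispM {N d : ℕ} (Z : Fin N → Matrix (Fin d) (Fin d) ℝ) : ℝ :=
  Real.sqrt ((N : ℝ)⁻¹ * ∑ i, frobSq (Z i - (N : ℝ)⁻¹ • ∑ j, Z j))

/-- The stacked family `(A ⊗ I_{d²})Z` with `i`-th block `∑ⱼ Aᵢⱼ zⱼ`. -/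
noncomputable def mixM {N d : ℕ} (A : Matrix (Fin N) (Fin N) ℝ)
    (Z : Fin N → Matrix (Fin d) (Fin d) ℝ) : Fin N → Matrix (Fin d) (Fin d) ℝ :=
  fun i => ∑ j, A i j • Z j

/-- Stacked Euclidean norm `‖S‖ = sqrt(∑ᵢ ‖sᵢ‖²)`. -/
noncomputable def stackNorm {N d : ℕ} (S : Fin N → EuclideanSpace ℝ (Fin d)) : ℝ :=
  Real.sqrt (∑ i, ‖S i‖ ^ 2)

/-- The Hessian of `f : ℝ^d → ℝ` at `x`, as a `d×d` matrix. -/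
noncomputable def hessMatrix {d : ℕ} (f : EuclideanSpace ℝ (Fin d) → ℝ)
    (x : EuclideanSpace ℝ (Fin d)) : Matrix (Fin d) (Fin d) ℝ :=
  Matrix.of fun a b => (fderiv ℝ (gradient f) x (EuclideanSpace.single b 1)) a

/-!
Double stochasticity makes mixing commute with centring: the centred blocks of `(W ⊗ I)Z` are
`(W − J) ⊗ I` applied to the centred blocks of `Z`, and `A ⊗ I` acts entrywise, so it scales the
stacked Frobenius norm by at most `‖A‖₂`. Hence each mixing step contracts `D` by `ρ`. Next, `D` is
a scaled Euclidean norm of the centred stack, so `D(H̃ + Δ) ≤ D(H̃) + D(Δ)`, and `D(Δ)` is at most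
the uncentred RMS of the blocks, where `‖Δᵢ‖_F ≤ √d ‖∇²fᵢ(xᵢ') − ∇²fᵢ(xᵢ)‖₂ ≤ √d L₂ ‖xᵢ' − xᵢ‖`.
-/

open Matrix

section SumSq

variable {ι : Type*} [Fintype ι]

theorem sum_sq_sub_mean_le (u : ι → ℝ) :
    ∑ i, (u i - (Fintype.card ι : ℝ)⁻¹ * ∑ j, u j) ^ 2 ≤ ∑ i, u i ^ 2 := by
  set n : ℝ := (Fintype.card ι : ℝ)
  set S := ∑ j, u j
  -- `n * n⁻¹` rather than `1`, so that the identity also holds for empty `ι`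
  have expand : ∑ i, (u i - n⁻¹ * S) ^ 2 = ∑ i, u i ^ 2 - n⁻¹ * S ^ 2 * (2 - n * n⁻¹) := by
    simp only [sub_sq, Finset.sum_add_distrib, Finset.sum_sub_distrib, ← Finset.sum_mul,
      ← Finset.mul_sum, Finset.sum_const, Finset.card_univ, nsmul_eq_mul]
    ring
  have hn : n * n⁻¹ ≤ 1 := mul_inv_le_one
  have hdefect : 0 ≤ n⁻¹ * S ^ 2 * (2 - n * n⁻¹) := mul_nonneg (by positivity) (by linarith)
  linarith

theorem sum_sq_mulVec_le [DecidableEq ι] (A : Matrix ι ι ℝ) (u : ι → ℝ) :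
    ∑ i, (A *ᵥ u) i ^ 2 ≤ ‖toEuclideanCLM (𝕜 := ℝ) A‖ ^ 2 * ∑ i, u i ^ 2 := by
  have h := pow_le_pow_left₀ (norm_nonneg _)
    ((toEuclideanCLM (𝕜 := ℝ) A).le_opNorm (WithLp.toLp 2 u)) 2
  rwa [toEuclideanCLM_toLp, mul_pow, EuclideanSpace.real_norm_sq_eq,
    EuclideanSpace.real_norm_sq_eq] at h

end SumSq

theorem frobSq_le_card_mul_opNorm_sq {d : ℕ}
    (T : EuclideanSpace ℝ (Fin d) →L[ℝ] EuclideanSpace ℝ (Fin d)) :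
    frobSq (Matrix.of fun a b => T (EuclideanSpace.single b 1) a) ≤ d * ‖T‖ ^ 2 := by
  calc frobSq (Matrix.of fun a b => T (EuclideanSpace.single b 1) a)
      = ∑ b, ‖T (EuclideanSpace.single b 1)‖ ^ 2 := by
        simp only [frobSq, of_apply, EuclideanSpace.real_norm_sq_eq]
        exact Finset.sum_comm
    _ ≤ ∑ _b : Fin d, ‖T‖ ^ 2 := by
        gcongr with b
        simpa using T.le_opNorm (EuclideanSpace.single b 1)
    _ = d * ‖T‖ ^ 2 := by simp

theorem frobSq_hessMatrix_sub_le {d : ℕ} (f : EuclideanSpace ℝ (Fin d) → ℝ)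
    (x y : EuclideanSpace ℝ (Fin d)) :
    frobSq (hessMatrix f x - hessMatrix f y) ≤
      d * ‖fderiv ℝ (gradient f) x - fderiv ℝ (gradient f) y‖ ^ 2 := by
  convert frobSq_le_card_mul_opNorm_sq (fderiv ℝ (gradient f) x - fderiv ℝ (gradient f) y)
  ext a b
  simp [hessMatrix]

section Stacked

variable {N d : ℕ}

theorem stackNorm_sq (S : Fin N → EuclideanSpace ℝ (Fin d)) :
    stackNorm S ^ 2 = ∑ i, ‖S i‖ ^ 2 :=
  Real.sq_sqrt (by positivity)

theorem mul_stackNorm_nonneg {c : ℝ} {S : Fin N → EuclideanSpace ℝ (Fin d)}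
    (h : ∀ i, 0 ≤ c * ‖S i‖) : 0 ≤ c * stackNorm S := by
  rcases le_or_gt 0 c with hc | hc
  · exact mul_nonneg hc (Real.sqrt_nonneg _)
  · have hS : ∀ i, ‖S i‖ = 0 := fun i =>
      le_antisymm (nonpos_of_mul_nonneg_right (h i) hc) (norm_nonneg _)
    simp [stackNorm, hS]

noncomputable def stackVec (Z : Fin N → Matrix (Fin d) (Fin d) ℝ) :
    EuclideanSpace ℝ (Fin N × Fin d × Fin d) :=
  WithLp.toLp 2 fun p => Z p.1 p.2.1 p.2.2

theorem stackVec_add (A B : Fin N → Matrix (Fin d) (Fin d) ℝ) :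
    stackVec (A + B) = stackVec A + stackVec B :=
  rfl

theorem norm_stackVec (Z : Fin N → Matrix (Fin d) (Fin d) ℝ) :
    ‖stackVec Z‖ = √(∑ i, frobSq (Z i)) := by
  rw [EuclideanSpace.norm_eq]
  simp [stackVec, frobSq, Fintype.sum_prod_type]

theorem sum_frobSq_eq_sum_sum_sum (Z : Fin N → Matrix (Fin d) (Fin d) ℝ) :
    ∑ i, frobSq (Z i) = ∑ a, ∑ b, ∑ i, Z i a b ^ 2 := by
  simp only [frobSq]
  rw [Finset.sum_comm]
  exact Finset.sum_congr rfl fun _ _ => Finset.sum_comm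

noncomputable def centered (Z : Fin N → Matrix (Fin d) (Fin d) ℝ) :
    Fin N → Matrix (Fin d) (Fin d) ℝ :=
  fun i => Z i - (N : ℝ)⁻¹ • ∑ j, Z j

theorem dispM_eq_sqrt_mean_frobSq_centered (Z : Fin N → Matrix (Fin d) (Fin d) ℝ) :
    dispM Z = √((N : ℝ)⁻¹ * ∑ i, frobSq (centered Z i)) :=
  rfl

theorem dispM_eq_norm_stackVec (Z : Fin N → Matrix (Fin d) (Fin d) ℝ) :
    dispM Z = √(N : ℝ)⁻¹ * ‖stackVec (centered Z)‖ := by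
  rw [norm_stackVec, dispM_eq_sqrt_mean_frobSq_centered, Real.sqrt_mul (by positivity)]

theorem sum_centered (Z : Fin N → Matrix (Fin d) (Fin d) ℝ) : ∑ j, centered Z j = 0 := by
  rcases Nat.eq_zero_or_pos N with rfl | hN
  · simp
  · have hN' : (N : ℝ) ≠ 0 := by positivity
    simp only [centered, Finset.sum_sub_distrib, Finset.sum_const, Finset.card_univ,
      Fintype.card_fin, ← Nat.cast_smul_eq_nsmul ℝ, smul_smul, mul_inv_cancel₀ hN', one_smul,
      sub_self]

theorem centered_add (A B : Fin N → Matrix (Fin d) (Fin d) ℝ) :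
    centered (A + B) = centered A + centered B := by
  ext i : 1
  simp only [centered, Pi.add_apply, Finset.sum_add_distrib, smul_add]
  abel

theorem dispM_add_le (A B : Fin N → Matrix (Fin d) (Fin d) ℝ) :
    dispM (A + B) ≤ dispM A + dispM B := by
  simp only [dispM_eq_norm_stackVec, centered_add, stackVec_add, ← mul_add]
  exact mul_le_mul_of_nonneg_left (norm_add_le _ _) (Real.sqrt_nonneg _)

theorem dispM_le_sqrt_mean_frobSq (Z : Fin N → Matrix (Fin d) (Fin d) ℝ) :
    dispM Z ≤ √((N : ℝ)⁻¹ * ∑ i, frobSq (Z i)) := by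
  refine Real.sqrt_le_sqrt (mul_le_mul_of_nonneg_left ?_ (by positivity))
  rw [sum_frobSq_eq_sum_sum_sum, sum_frobSq_eq_sum_sum_sum]
  refine Finset.sum_le_sum fun a _ => Finset.sum_le_sum fun b _ => ?_
  simpa [centered, Matrix.sum_apply] using sum_sq_sub_mean_le fun i => Z i a b

theorem mixM_one (Z : Fin N → Matrix (Fin d) (Fin d) ℝ) : mixM 1 Z = Z := by
  ext i : 1
  simp [mixM, one_apply]

theorem mixM_mul (A B : Matrix (Fin N) (Fin N) ℝ) (Z : Fin N → Matrix (Fin d) (Fin d) ℝ) :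
    mixM (A * B) Z = mixM A (mixM B Z) := by
  ext i : 1
  simp only [mixM, mul_apply, Finset.sum_smul, Finset.smul_sum, smul_smul]
  exact Finset.sum_comm

theorem sum_mixM (W : Matrix (Fin N) (Fin N) ℝ) (hcol : ∀ j, ∑ i, W i j = 1)
    (Z : Fin N → Matrix (Fin d) (Fin d) ℝ) : ∑ i, mixM W Z i = ∑ j, Z j := by
  simp only [mixM]
  rw [Finset.sum_comm]
  simp only [← Finset.sum_smul, hcol, one_smul]

theorem sum_frobSq_mixM_le (A : Matrix (Fin N) (Fin N) ℝ)
    (Y : Fin N → Matrix (Fin d) (Fin d) ℝ) :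
    ∑ i, frobSq (mixM A Y i) ≤ ‖toEuclideanCLM (𝕜 := ℝ) A‖ ^ 2 * ∑ i, frobSq (Y i) := by
  have entry : ∀ i a b, mixM A Y i a b = (A *ᵥ fun j => Y j a b) i := fun i a b => by
    simp [mixM, Matrix.sum_apply, mulVec, dotProduct]
  simp only [sum_frobSq_eq_sum_sum_sum, entry, Finset.mul_sum]
  refine Finset.sum_le_sum fun a _ => Finset.sum_le_sum fun b _ => ?_
  rw [← Finset.mul_sum]
  exact sum_sq_mulVec_le A _

noncomputable def avgMatrix (N : ℕ) : Matrix (Fin N) (Fin N) ℝ :=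
  (N : ℝ)⁻¹ • Matrix.of fun _ _ => 1

theorem centered_mixM (W : Matrix (Fin N) (Fin N) ℝ) (hrow : ∀ i, ∑ j, W i j = 1)
    (hcol : ∀ j, ∑ i, W i j = 1) (Z : Fin N → Matrix (Fin d) (Fin d) ℝ) :
    centered (mixM W Z) = mixM (W - avgMatrix N) (centered Z) := by
  ext i : 1
  calc centered (mixM W Z) i = mixM W Z i - (N : ℝ)⁻¹ • ∑ j, Z j := by
        rw [centered, sum_mixM W hcol]
    _ = ∑ j, W i j • centered Z j := by
        simp only [centered, mixM, smul_sub, Finset.sum_sub_distrib, ← Finset.sum_smul, hrow,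
          one_smul]
    _ = mixM (W - avgMatrix N) (centered Z) i := by
        simp only [mixM, avgMatrix, Matrix.sub_apply, Matrix.smul_apply, of_apply, smul_eq_mul,
          mul_one, sub_smul, Finset.sum_sub_distrib, ← Finset.smul_sum, sum_centered, smul_zero,
          sub_zero]

theorem dispM_mixM_le (W : Matrix (Fin N) (Fin N) ℝ) (hrow : ∀ i, ∑ j, W i j = 1)
    (hcol : ∀ j, ∑ i, W i j = 1) (Z : Fin N → Matrix (Fin d) (Fin d) ℝ) :
    dispM (mixM W Z) ≤ ‖toEuclideanCLM (𝕜 := ℝ) (W - avgMatrix N)‖ * dispM Z := by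
  set ρ := ‖toEuclideanCLM (𝕜 := ℝ) (W - avgMatrix N)‖
  calc dispM (mixM W Z)
      = √((N : ℝ)⁻¹ * ∑ i, frobSq (mixM (W - avgMatrix N) (centered Z) i)) := by
        rw [dispM_eq_sqrt_mean_frobSq_centered, centered_mixM W hrow hcol]
    _ ≤ √(ρ ^ 2 * ((N : ℝ)⁻¹ * ∑ i, frobSq (centered Z i))) := by
        rw [mul_left_comm]
        gcongr
        exact sum_frobSq_mixM_le _ _
    _ = ρ * dispM Z := by
        rw [Real.sqrt_mul (sq_nonneg _), Real.sqrt_sq (norm_nonneg _),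
          dispM_eq_sqrt_mean_frobSq_centered]

theorem dispM_mixM_pow_le (W : Matrix (Fin N) (Fin N) ℝ) (hrow : ∀ i, ∑ j, W i j = 1)
    (hcol : ∀ j, ∑ i, W i j = 1) (Z : Fin N → Matrix (Fin d) (Fin d) ℝ) (m : ℕ) :
    dispM (mixM (W ^ m) Z) ≤ ‖toEuclideanCLM (𝕜 := ℝ) (W - avgMatrix N)‖ ^ m * dispM Z := by
  induction m with
  | zero => simp [mixM_one]
  | succ m ih =>
    rw [pow_succ', mixM_mul, pow_succ', mul_assoc]
    exact (dispM_mixM_le W hrow hcol _).trans (mul_le_mul_of_nonneg_left ih (norm_nonneg _))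

theorem dispM_hessMatrix_sub_le (L₂ : ℝ) (f : Fin N → EuclideanSpace ℝ (Fin d) → ℝ)
    (hLip : ∀ i, ∀ x y : EuclideanSpace ℝ (Fin d),
      ‖fderiv ℝ (gradient (f i)) x - fderiv ℝ (gradient (f i)) y‖ ≤ L₂ * ‖x - y‖)
    (X X' : Fin N → EuclideanSpace ℝ (Fin d)) :
    dispM (fun i => hessMatrix (f i) (X' i) - hessMatrix (f i) (X i)) ≤
      √d * L₂ / √N * stackNorm (X' - X) := by
  have hsum : ∑ i, frobSq (hessMatrix (f i) (X' i) - hessMatrix (f i) (X i)) ≤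
      d * (L₂ ^ 2 * ∑ i, ‖(X' - X) i‖ ^ 2) := by
    rw [Finset.mul_sum, Finset.mul_sum]
    refine Finset.sum_le_sum fun i _ => ?_
    rw [← mul_pow]
    exact (frobSq_hessMatrix_sub_le _ _ _).trans (by gcongr; exact hLip i _ _)
  have hnonneg : 0 ≤ √d * L₂ / √N * stackNorm (X' - X) := by
    rw [mul_div_right_comm, mul_assoc]
    exact mul_nonneg (by positivity)
      (mul_stackNorm_nonneg fun i => (norm_nonneg _).trans (hLip i _ _))
  have hsq : (√d * L₂ / √N * stackNorm (X' - X)) ^ 2 =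
      (N : ℝ)⁻¹ * (d * (L₂ ^ 2 * ∑ i, ‖(X' - X) i‖ ^ 2)) := by
    rw [← stackNorm_sq, div_mul_eq_mul_div, div_pow, mul_pow, mul_pow, Real.sq_sqrt d.cast_nonneg,
      Real.sq_sqrt N.cast_nonneg]
    ring
  calc dispM (fun i => hessMatrix (f i) (X' i) - hessMatrix (f i) (X i))
      ≤ √((N : ℝ)⁻¹ * ∑ i, frobSq (hessMatrix (f i) (X' i) - hessMatrix (f i) (X i))) :=
        dispM_le_sqrt_mean_frobSq _
    _ ≤ √d * L₂ / √N * stackNorm (X' - X) := by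
        rw [Real.sqrt_le_left hnonneg, hsq]
        exact mul_le_mul_of_nonneg_left hsum (by positivity)

end Stacked

theorem stmt5_general {N d : ℕ}
    (W : Matrix (Fin N) (Fin N) ℝ)
    (hrow : ∀ i, ∑ j, W i j = 1)
    (hcol : ∀ j, ∑ i, W i j = 1)
    (J : Matrix (Fin N) (Fin N) ℝ)
    (hJ : J = (N : ℝ)⁻¹ • Matrix.of (fun _ _ => (1 : ℝ)))
    (ρ : ℝ) (hρ : ρ = ‖Matrix.toEuclideanCLM (𝕜 := ℝ) (W - J)‖)
    (L₂ : ℝ) (f : Fin N → EuclideanSpace ℝ (Fin d) → ℝ)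
    (hLip : ∀ i, ∀ x y : EuclideanSpace ℝ (Fin d),
      ‖fderiv ℝ (gradient (f i)) x - fderiv ℝ (gradient (f i)) y‖ ≤ L₂ * ‖x - y‖)
    (X X' : Fin N → EuclideanSpace ℝ (Fin d))
    (H : Fin N → Matrix (Fin d) (Fin d) ℝ)
    (m : ℕ) :
    dispM (mixM (W ^ m) (H + fun i => hessMatrix (f i) (X' i) - hessMatrix (f i) (X i)))
      ≤ ρ ^ m * (dispM H + (Real.sqrt d * L₂ / Real.sqrt N) * stackNorm (X' - X)) := by
  obtain rfl : J = avgMatrix N := hJ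
  subst hρ
  calc dispM (mixM (W ^ m) (H + fun i => hessMatrix (f i) (X' i) - hessMatrix (f i) (X i)))
      ≤ ‖toEuclideanCLM (𝕜 := ℝ) (W - avgMatrix N)‖ ^ m *
          dispM (H + fun i => hessMatrix (f i) (X' i) - hessMatrix (f i) (X i)) :=
        dispM_mixM_pow_le W hrow hcol _ m
    _ ≤ _ := by
        gcongr
        exact (dispM_add_le _ _).trans (by gcongr; exact dispM_hessMatrix_sub_le L₂ f hLip X X')

/-- Hessian-tracker dispersion recursion:
with `Δᵢ = ∇²fᵢ(xᵢ') − ∇²fᵢ(xᵢ)` (blocks in Frobenius norm),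
`D((Wᵐ ⊗ I_{d²})(H̃ + Δ)) ≤ ρᵐ·(D(H̃) + (√d·L₂/√N)·‖X' − X‖)`. -/
theorem stmt5 {N d : ℕ} (hN : 0 < N)
    (W : Matrix (Fin N) (Fin N) ℝ)
    (hsymm : W.IsSymm)
    (hnonneg : ∀ i j, 0 ≤ W i j)
    (hrow : ∀ i, ∑ j, W i j = 1)
    (hcol : ∀ j, ∑ i, W i j = 1)
    (J : Matrix (Fin N) (Fin N) ℝ)
    (hJ : J = (N : ℝ)⁻¹ • Matrix.of (fun _ _ => (1 : ℝ)))
    (ρ : ℝ) (hρ : ρ = ‖Matrix.toEuclideanCLM (𝕜 := ℝ) (W - J)‖)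
    (L₂ : ℝ) (f : Fin N → EuclideanSpace ℝ (Fin d) → ℝ)
    (hC2 : ∀ i, ContDiff ℝ 2 (f i))
    (hLip : ∀ i, ∀ x y : EuclideanSpace ℝ (Fin d),
      ‖fderiv ℝ (gradient (f i)) x - fderiv ℝ (gradient (f i)) y‖ ≤ L₂ * ‖x - y‖)
    (X X' : Fin N → EuclideanSpace ℝ (Fin d))
    (H : Fin N → Matrix (Fin d) (Fin d) ℝ)
    (m : ℕ) (hm : 1 ≤ m) :
    dispM (mixM (W ^ m) (H + fun i => hessMatrix (f i) (X' i) - hessMatrix (f i) (X i)))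
      ≤ ρ ^ m * (dispM H + (Real.sqrt d * L₂ / Real.sqrt N) * stackNorm (X' - X)) :=
  stmt5_general W hrow hcol J hJ ρ hρ L₂ f hLip X X' H m
end

section
/- Let M ≥ L₂ > 0. For i = 1,…,N let gᵢ ∈ ℝ^d, let Hᵢ be a d×d real symmetric matrix, set λᵢ := √(M‖gᵢ‖) and δᵢ := max{0, −λ_min(Hᵢ)}, and let sᵢ := 0 if gᵢ = 0 and otherwise the solution of (Hᵢ + (λᵢ + δᵢ)I)sᵢ = −gᵢ. Then L₂·‖(1/N)∑ᵢ sᵢ‖ ≤ (1/N)∑ᵢ λᵢ ≤ (1/N)∑ᵢ (λᵢ + δᵢ). -/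
/-!
Writing `Hᵢ + (λᵢ + δᵢ)I = Aᵢ + λᵢI` with `Aᵢ = Hᵢ + δᵢI` positive semidefinite, pairing the
step equation with `sᵢ` gives `λᵢ‖sᵢ‖² ≤ ⟪sᵢ, (Aᵢ + λᵢI)sᵢ⟫ = -⟪sᵢ, gᵢ⟫ ≤ ‖sᵢ‖‖gᵢ‖`, so
`λᵢ‖sᵢ‖ ≤ ‖gᵢ‖ = λᵢ²/M`, i.e. `M‖sᵢ‖ ≤ λᵢ`. Averaging with the triangle inequality and `L₂ ≤ M`
gives the first bound; the second is `δᵢ ≥ 0`.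
-/

open scoped InnerProductSpace

theorem Matrix.IsHermitian.posSemidef_add_smul_one {n : Type*} [Fintype n] [DecidableEq n]
    {A : Matrix n n ℝ} (hA : A.IsHermitian) {c : ℝ} (hc : ∀ i, 0 ≤ hA.eigenvalues i + c) :
    (A + c • 1).PosSemidef := by
  rw [Matrix.posSemidef_iff_isHermitian_and_spectrum_nonneg]
  refine ⟨hA.add (Matrix.isHermitian_one.smul (.all c)), ?_⟩
  rw [← Algebra.algebraMap_eq_smul_one, ← spectrum.add_singleton_eq,
    hA.spectrum_real_eq_range_eigenvalues]
  rintro _ ⟨_, ⟨i, rfl⟩, _, rfl, rfl⟩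
  exact hc i

theorem mul_norm_le_norm_of_apply_add_smul_eq_neg {E : Type*} [NormedAddCommGroup E]
    [InnerProductSpace ℝ E] {T : E →L[ℝ] E} (hT : ∀ x, 0 ≤ ⟪x, T x⟫_ℝ) {c : ℝ} {s g : E}
    (h : T s + c • s = -g) : c * ‖s‖ ≤ ‖g‖ := by
  rcases (norm_nonneg s).eq_or_lt with hs | hs
  · simp [← hs]
  refine le_of_mul_le_mul_right ?_ hs
  calc c * ‖s‖ * ‖s‖ ≤ ⟪s, T s⟫_ℝ + c * ‖s‖ ^ 2 := by nlinarith [hT s]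
    _ = -⟪s, g⟫_ℝ := by
      rw [← inner_neg_right, ← h, inner_add_right, real_inner_smul_right, real_inner_self_eq_norm_sq]
    _ ≤ ‖g‖ * ‖s‖ := by
      rw [← inner_neg_right, mul_comm]
      exact (real_inner_le_norm _ _).trans_eq (by rw [norm_neg])

theorem mul_le_sqrt_mul_of_sqrt_mul_mul_le {M a b : ℝ} (hM : 0 ≤ M) (hb : 0 < b)
    (h : √(M * b) * a ≤ b) : M * a ≤ √(M * b) := by
  rcases hM.eq_or_lt with rfl | hM
  · simp
  have hr : 0 < √(M * b) := Real.sqrt_pos.mpr (by positivity)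
  refine le_of_mul_le_mul_right ?_ hr
  calc M * a * √(M * b) = M * (√(M * b) * a) := by ring
    _ ≤ M * b := by gcongr
    _ = √(M * b) * √(M * b) := (Real.mul_self_sqrt (by positivity)).symm

theorem mul_norm_le_of_toEuclideanCLM_add_smul_one_eq_neg {n : Type*} [Fintype n]
    [DecidableEq n] {H : Matrix n n ℝ} (hH : H.IsHermitian) {δ M : ℝ}
    (hδ : ∀ i, 0 ≤ hH.eigenvalues i + δ) (hM : 0 ≤ M) {g s : EuclideanSpace ℝ n} (hg : g ≠ 0)
    (hs : Matrix.toEuclideanCLM (𝕜 := ℝ) (H + (√(M * ‖g‖) + δ) • 1) s = -g) :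
    M * ‖s‖ ≤ √(M * ‖g‖) := by
  have hpos : ∀ x, 0 ≤ ⟪x, Matrix.toEuclideanCLM (𝕜 := ℝ) (H + δ • 1) x⟫_ℝ :=
    (Matrix.isPositive_toEuclideanLin_iff.mpr (hH.posSemidef_add_smul_one hδ)).inner_nonneg_right
  refine mul_le_sqrt_mul_of_sqrt_mul_mul_le hM (norm_pos_iff.mpr hg) ?_
  refine mul_norm_le_norm_of_apply_add_smul_eq_neg hpos (hs.symm ▸ ?_)
  simp only [map_add, map_smul, map_one, add_smul, add_apply, smul_apply, one_apply_eq_self]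
  abel

theorem stmt7_general {N d : ℕ}
    (M L₂ : ℝ) (hL₂ : 0 < L₂) (hML : L₂ ≤ M)
    (g : Fin N → EuclideanSpace ℝ (Fin d))
    (H : Fin N → Matrix (Fin d) (Fin d) ℝ)
    (hH : ∀ i, (H i).IsHermitian)
    (lam δ : Fin N → ℝ)
    (hlam : ∀ i, lam i = Real.sqrt (M * ‖g i‖))
    (hδ : ∀ i, δ i = max 0 (-(⨅ j, (hH i).eigenvalues j)))
    (s : Fin N → EuclideanSpace ℝ (Fin d))
    (hs0 : ∀ i, g i = 0 → s i = 0)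
    (hs : ∀ i, g i ≠ 0 →
      Matrix.toEuclideanCLM (𝕜 := ℝ)
        (H i + (lam i + δ i) • (1 : Matrix (Fin d) (Fin d) ℝ)) (s i) = -(g i)) :
    L₂ * ‖(N : ℝ)⁻¹ • ∑ i, s i‖ ≤ (N : ℝ)⁻¹ * ∑ i, lam i ∧
      (N : ℝ)⁻¹ * ∑ i, lam i ≤ (N : ℝ)⁻¹ * ∑ i, (lam i + δ i) := by
  have hM : 0 ≤ M := hL₂.le.trans hML
  have hstep : ∀ i, L₂ * ‖s i‖ ≤ lam i := by
    intro i
    refine (mul_le_mul_of_nonneg_right hML (norm_nonneg _)).trans ?_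
    by_cases hg : g i = 0
    · simp [hs0 i hg, hlam i, hg]
    have hshift : ∀ j, 0 ≤ (hH i).eigenvalues j + δ i := fun j => by
      have hmin := ciInf_le (Finite.bddBelow_range (hH i).eigenvalues) j
      have hδmin := (hδ i).symm ▸ le_max_right 0 (-(⨅ j, (hH i).eigenvalues j))
      linarith
    have hsi := hs i hg
    rw [hlam i] at hsi ⊢
    exact mul_norm_le_of_toEuclideanCLM_add_smul_one_eq_neg (hH i) hshift hM hg hsi
  constructor
  · rw [norm_smul, Real.norm_of_nonneg (by positivity), mul_left_comm]
    gcongr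
    calc L₂ * ‖∑ i, s i‖ ≤ L₂ * ∑ i, ‖s i‖ := by gcongr; exact norm_sum_le _ _
      _ ≤ ∑ i, lam i := by rw [Finset.mul_sum]; exact Finset.sum_le_sum fun i _ => hstep i
  · gcongr with i
    exact le_add_of_nonneg_right ((hδ i).symm ▸ le_max_left _ _)

/-- average-step regularization bound.
With local regularized Newton steps `sᵢ` (zero when `gᵢ = 0`, otherwise solving
`(Hᵢ + (λᵢ + δᵢ)I)sᵢ = −gᵢ` with `λᵢ = √(M‖gᵢ‖)`, `δᵢ = max{0, −λ_min(Hᵢ)}`) and `M ≥ L₂ > 0`,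
`L₂‖(1/N)∑ᵢ sᵢ‖ ≤ (1/N)∑ᵢ λᵢ ≤ (1/N)∑ᵢ (λᵢ + δᵢ)`. -/
theorem stmt7 {N d : ℕ} (hN : 0 < N)
    (M L₂ : ℝ) (hL₂ : 0 < L₂) (hML : L₂ ≤ M)
    (g : Fin N → EuclideanSpace ℝ (Fin d))
    (H : Fin N → Matrix (Fin d) (Fin d) ℝ)
    (hH : ∀ i, (H i).IsHermitian)
    (lam δ : Fin N → ℝ)
    (hlam : ∀ i, lam i = Real.sqrt (M * ‖g i‖))
    (hδ : ∀ i, δ i = max 0 (-(⨅ j, (hH i).eigenvalues j)))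
    (s : Fin N → EuclideanSpace ℝ (Fin d))
    (hs0 : ∀ i, g i = 0 → s i = 0)
    (hs : ∀ i, g i ≠ 0 →
      Matrix.toEuclideanCLM (𝕜 := ℝ)
        (H i + (lam i + δ i) • (1 : Matrix (Fin d) (Fin d) ℝ)) (s i) = -(g i)) :
    L₂ * ‖(N : ℝ)⁻¹ • ∑ i, s i‖ ≤ (N : ℝ)⁻¹ * ∑ i, lam i ∧
      (N : ℝ)⁻¹ * ∑ i, lam i ≤ (N : ℝ)⁻¹ * ∑ i, (lam i + δ i) :=
  stmt7_general M L₂ hL₂ hML g H hH lam δ hlam hδ s hs0 hs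
end
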